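/- Let s : ℕ → ℚ be defined by s(n) = 0 for n ≤ 4, s(5) = 4/4113, s(6) = 72/4113, s(7) = 540/4113, s(8) = 2184/4113, and s(n) = n − 8 for n ≥ 9. Then for every finite multiset M of natural numbers, the sum over t ∈ M of s(t) is at most s of the sum of the elements of M, i.e., (M.map s).sum ≤ s(M.sum). -/
import Mathlib


/-- The weight function from the paper. -/
def s (n : ℕ) : ℚ :=
  if n ≤ 4 then 0
  else if n = 5 then 4/4113
  else if n = 6 then 72/4113
  else if n = 7 then 540/4113
  else if n = 8 then 2184/4113
  else (n : ℚ) - 8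

lemma s_eval (n : ℕ) (hn : 9 ≤ n) : s n = (n : ℚ) - 8 := by
  have h1 : ¬ n ≤ 4 := by omega
  have h2 : n ≠ 5 := by omega
  have h3 : n ≠ 6 := by omega
  have h4 : n ≠ 7 := by omega
  have h5 : n ≠ 8 := by omega
  simp [s, h1, h2, h3, h4, h5]

lemma s_small_le (a : ℕ) (ha : a ≤ 8) : s a ≤ (a : ℚ) := by
  interval_cases a <;> norm_num [s]

lemma s_superadd (a b : ℕ) : s a + s b ≤ s (a + b) := by
  rcases le_or_gt a 8 with ha | ha
  · rcases le_or_gt b 8 with hb | hb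
    · interval_cases a <;> interval_cases b <;> norm_num [s]
    · rw [s_eval b (by omega), s_eval (a + b) (by omega)]
      have := s_small_le a ha
      push_cast
      linarith
  · rcases le_or_gt b 8 with hb | hb
    · rw [s_eval a (by omega), s_eval (a + b) (by omega)]
      have := s_small_le b hb
      push_cast
      linarith
    · rw [s_eval a (by omega), s_eval b (by omega), s_eval (a + b) (by omega)]
      push_cast
      linarith

/-- Superadditivity of `s` over multisets. -/
theorem s_multiset_superadditive (M : Multiset ℕ) :
    (M.map s).sum ≤ s M.sum := by
  induction M using Multiset.induction with
  | empty => simp [s]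
  | cons a M ih =>
    simp only [Multiset.map_cons, Multiset.sum_cons]
    calc s a + (M.map s).sum ≤ s a + s M.sum := by linarith
      _ ≤ s (a + M.sum) := s_superadd a M.sum
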